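/- arXiv:1707.04118 — 3 statements merged into one kernel-verified Lean document; each statement's English description precedes it below -/
import Mathlib

section
/- Let Σ be the complex plane punctured at q−1 distinct points α₁,…,α_{q−1}, with holomorphic 1-form ω = dz/∏_{i=1}^{q−1}(z−α_i) and meromorphic function g(z) = z. If q ≤ m+2 (m a positive integer), then along every divergent curve Γ in Σ (a curve leaving every compact set, tending to one of the punctures or to ∞) the length integral ∫_Γ (1+|z|²)^{m/2} / ∏_{i=1}^{q−1}|z−α_i| |dz| is infinite; i.e., the conformal metric ds² = (1+|g|²)^m |ω|² is complete. -/
/-!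
The potential `Φ z = log (1 + ‖z‖²) + ∑ i, log ((1 + ‖z‖²) / ‖z - α i‖²)` is bounded below and
tends to `+∞` at every puncture and at infinity, so its sublevel sets are compact subsets of `Σ`.
Its gradient is bounded by a linear combination of `1 / √(1 + ‖z‖²)` and the `1 / ‖z - α i‖`;
since there are at most `m + 1` punctures, each of these is at most a constant times the metric
density `(1 + ‖z‖²) ^ (m / 2) / ∏ i, ‖z - α i‖`. Hence `Φ` stays bounded along a curve of finite
length, and such a curve stays in a compact subset of `Σ`.
-/

open MeasureTheory Set Real Finset Metric
open scoped RealInnerProductSpace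

variable {E : Type*} [NormedAddCommGroup E] {ι : Type*} [Fintype ι]

omit [Fintype ι] in
lemma norm_sub_pos_of_notMem_range {α : ι → E} {z : E} (hz : z ∉ range α) (i : ι) :
    0 < ‖z - α i‖ :=
  norm_pos_iff.2 (sub_ne_zero.2 fun h => hz ⟨i, h.symm⟩)

lemma norm_sub_sq_le_one_add_sq_mul_one_add_sq (z a : E) :
    ‖z - a‖ ^ 2 ≤ (1 + ‖z‖ ^ 2) * (1 + ‖a‖ ^ 2) := by
  nlinarith [norm_sub_le z a, norm_nonneg (z - a), norm_nonneg z, norm_nonneg a,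
    sq_nonneg (‖z‖ * ‖a‖ - 1)]

lemma norm_sub_le_sqrt_mul_sqrt (z a : E) :
    ‖z - a‖ ≤ √(1 + ‖z‖ ^ 2) * √(1 + ‖a‖ ^ 2) := by
  rw [← sqrt_mul (by positivity)]
  exact le_sqrt_of_sq_le (norm_sub_sq_le_one_add_sq_mul_one_add_sq z a)

lemma prod_norm_sub_le_of_card_le (α : ι → E) (z : E) {s : Finset ι} {k : ℕ} (hk : #s ≤ k) :
    ∏ i ∈ s, ‖z - α i‖ ≤ (∏ i, √(1 + ‖α i‖ ^ 2)) * √(1 + ‖z‖ ^ 2) ^ k :=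
  calc ∏ i ∈ s, ‖z - α i‖ ≤ ∏ i ∈ s, (√(1 + ‖α i‖ ^ 2) * √(1 + ‖z‖ ^ 2)) :=
        prod_le_prod (fun _ _ => norm_nonneg _)
          fun i _ => (norm_sub_le_sqrt_mul_sqrt z (α i)).trans_eq (mul_comm _ _)
    _ = (∏ i ∈ s, √(1 + ‖α i‖ ^ 2)) * √(1 + ‖z‖ ^ 2) ^ #s := by
        rw [prod_mul_distrib, prod_const]
    _ ≤ (∏ i, √(1 + ‖α i‖ ^ 2)) * √(1 + ‖z‖ ^ 2) ^ k := by
        have one_le (x : E) : 1 ≤ √(1 + ‖x‖ ^ 2) :=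
          Real.one_le_sqrt.2 (le_add_of_nonneg_right (by positivity))
        exact mul_le_mul (prod_le_prod_of_subset_of_one_le (subset_univ s)
            (fun _ _ => sqrt_nonneg _) fun i _ _ => one_le (α i))
          (pow_le_pow_right₀ (one_le z) hk) (by positivity) (by positivity)

noncomputable def metricDensity (m : ℕ) (α : ι → E) (z : E) : ℝ :=
  (1 + ‖z‖ ^ 2) ^ ((m : ℝ) / 2) / ∏ i, ‖z - α i‖

lemma metricDensity_eq (m : ℕ) (α : ι → E) (z : E) :
    metricDensity m α z = √(1 + ‖z‖ ^ 2) ^ m / ∏ i, ‖z - α i‖ := by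
  rw [metricDensity, rpow_div_two_eq_sqrt _ (by positivity), rpow_natCast]

lemma metricDensity_nonneg (m : ℕ) (α : ι → E) (z : E) : 0 ≤ metricDensity m α z := by
  rw [metricDensity_eq]
  positivity

lemma continuousOn_metricDensity (m : ℕ) (α : ι → E) :
    ContinuousOn (metricDensity m α) (range α)ᶜ := by
  refine ContinuousOn.div ?_ (by fun_prop) fun z hz => ?_
  · exact (Continuous.rpow_const (by fun_prop) fun _ => Or.inl (by positivity)).continuousOn
  exact (prod_pos fun i _ => norm_sub_pos_of_notMem_range hz i).ne'

section Estimates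

variable {m : ℕ} {α : ι → E} {z : E}

lemma inv_sqrt_one_add_norm_sq_le_metricDensity (hm : Fintype.card ι ≤ m + 1)
    (hz : z ∉ range α) :
    (√(1 + ‖z‖ ^ 2))⁻¹ ≤ (∏ i, √(1 + ‖α i‖ ^ 2)) * metricDensity m α z := by
  have hprod : 0 < ∏ i, ‖z - α i‖ := prod_pos fun i _ => norm_sub_pos_of_notMem_range hz i
  rw [metricDensity_eq, mul_div_assoc', le_div_iff₀ hprod, inv_mul_le_iff₀ (by positivity)]
  calc ∏ i, ‖z - α i‖ ≤ (∏ i, √(1 + ‖α i‖ ^ 2)) * √(1 + ‖z‖ ^ 2) ^ (m + 1) :=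
        prod_norm_sub_le_of_card_le α z (by rwa [card_univ])
    _ = √(1 + ‖z‖ ^ 2) * ((∏ i, √(1 + ‖α i‖ ^ 2)) * √(1 + ‖z‖ ^ 2) ^ m) := by ring

lemma inv_norm_sub_le_metricDensity (hm : Fintype.card ι ≤ m + 1) (hz : z ∉ range α) (i : ι) :
    ‖z - α i‖⁻¹ ≤ (∏ i, √(1 + ‖α i‖ ^ 2)) * metricDensity m α z := by
  classical
  have hprod : 0 < ∏ i, ‖z - α i‖ := prod_pos fun i _ => norm_sub_pos_of_notMem_range hz i
  rw [metricDensity_eq, mul_div_assoc', le_div_iff₀ hprod,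
    inv_mul_le_iff₀ (norm_sub_pos_of_notMem_range hz i), ← mul_prod_erase _ _ (mem_univ i)]
  gcongr
  exact prod_norm_sub_le_of_card_le α z (by rw [card_erase_of_mem (mem_univ i), card_univ]; omega)

end Estimates

noncomputable def potential (α : ι → E) (z : E) : ℝ :=
  log (1 + ‖z‖ ^ 2) + ∑ i, (log (1 + ‖z‖ ^ 2) - log (‖z - α i‖ ^ 2))

section Potential

variable {α : ι → E} {z : E}

lemma neg_log_one_add_norm_sq_le_log_sub_log {a : E} (hz : z ≠ a) :
    -log (1 + ‖a‖ ^ 2) ≤ log (1 + ‖z‖ ^ 2) - log (‖z - a‖ ^ 2) := by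
  have h : log (‖z - a‖ ^ 2) ≤ log (1 + ‖z‖ ^ 2) + log (1 + ‖a‖ ^ 2) := by
    rw [← log_mul (by positivity) (by positivity)]
    exact log_le_log (pow_pos (norm_pos_iff.2 (sub_ne_zero.2 hz)) 2)
      (norm_sub_sq_le_one_add_sq_mul_one_add_sq z a)
  linarith

lemma log_one_add_norm_sq_sub_le_potential (hz : z ∉ range α) :
    log (1 + ‖z‖ ^ 2) - ∑ i, log (1 + ‖α i‖ ^ 2) ≤ potential α z := by
  have := sum_le_sum fun i (_ : i ∈ Finset.univ) =>
    neg_log_one_add_norm_sq_le_log_sub_log (a := α i) fun h => hz ⟨i, h.symm⟩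
  rw [sum_neg_distrib] at this
  rw [potential]
  linarith

lemma neg_log_norm_sub_sq_sub_le_potential (hz : z ∉ range α) (i : ι) :
    -log (‖z - α i‖ ^ 2) - ∑ i, log (1 + ‖α i‖ ^ 2) ≤ potential α z := by
  classical
  have hlog : 0 ≤ log (1 + ‖z‖ ^ 2) := log_nonneg (le_add_of_nonneg_right (by positivity))
  have herase := sum_le_sum fun j (_ : j ∈ univ.erase i) =>
    neg_log_one_add_norm_sq_le_log_sub_log (a := α j) fun h => hz ⟨j, h.symm⟩
  have hsub : ∑ j ∈ univ.erase i, log (1 + ‖α j‖ ^ 2) ≤ ∑ j, log (1 + ‖α j‖ ^ 2) :=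
    sum_le_sum_of_subset_of_nonneg (erase_subset i univ)
      fun j _ _ => log_nonneg (le_add_of_nonneg_right (by positivity))
  have hsplit := add_sum_erase univ
    (fun j => log (1 + ‖z‖ ^ 2) - log (‖z - α j‖ ^ 2)) (mem_univ i)
  rw [sum_neg_distrib] at herase
  rw [potential, ← hsplit]
  linarith

lemma exists_isCompact_of_potential_le [ProperSpace E] (α : ι → E) (T : ℝ) :
    ∃ K, IsCompact K ∧ K ⊆ (range α)ᶜ ∧ ∀ z ∉ range α, potential α z ≤ T → z ∈ K := by
  set U := T + ∑ i, log (1 + ‖α i‖ ^ 2)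
  refine ⟨closedBall 0 (exp U) \ ⋃ i, ball (α i) (exp (-U / 2)),
    (isCompact_closedBall _ _).diff (isOpen_iUnion fun _ => isOpen_ball), ?_, ?_⟩
  · rintro z ⟨-, hz⟩ ⟨i, rfl⟩
    exact hz (mem_iUnion.2 ⟨i, mem_ball_self (exp_pos _)⟩)
  intro z hz hT
  refine ⟨?_, ?_⟩
  · have h := log_one_add_norm_sq_sub_le_potential hz
    rw [mem_closedBall_zero_iff]
    calc ‖z‖ ≤ 1 + ‖z‖ ^ 2 := by nlinarith [sq_nonneg (‖z‖ - 1)]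
      _ ≤ exp U := (log_le_iff_le_exp (by positivity)).1 (by linarith)
  · simp only [mem_iUnion, mem_ball, not_exists, not_lt, dist_eq_norm]
    intro i
    have h := neg_log_norm_sub_sq_sub_le_potential hz i
    rw [log_pow] at h
    exact (le_log_iff_exp_le (norm_sub_pos_of_notMem_range hz i)).1 (by push_cast at h; linarith)

end Potential

section Derivative

variable [InnerProductSpace ℝ E]

lemma abs_two_inner_div_one_add_norm_sq_le (w v : E) :
    |2 * ⟪w, v⟫ / (1 + ‖w‖ ^ 2)| ≤ 2 * (√(1 + ‖w‖ ^ 2))⁻¹ * ‖v‖ := by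
  have hs : 0 < √(1 + ‖w‖ ^ 2) := by positivity
  calc |2 * ⟪w, v⟫ / (1 + ‖w‖ ^ 2)| = 2 * |⟪w, v⟫| / √(1 + ‖w‖ ^ 2) ^ 2 := by
        rw [abs_div, abs_mul, abs_two, abs_of_pos (a := 1 + ‖w‖ ^ 2) (by positivity),
          sq_sqrt (by positivity)]
    _ ≤ 2 * (√(1 + ‖w‖ ^ 2) * ‖v‖) / √(1 + ‖w‖ ^ 2) ^ 2 := by
        gcongr
        exact (abs_real_inner_le_norm w v).trans (by gcongr; exact le_sqrt_of_sq_le (by linarith))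
    _ = 2 * (√(1 + ‖w‖ ^ 2))⁻¹ * ‖v‖ := by field_simp

lemma abs_two_inner_div_norm_sq_le (w v : E) : |2 * ⟪w, v⟫ / ‖w‖ ^ 2| ≤ 2 * ‖w‖⁻¹ * ‖v‖ := by
  rcases eq_or_ne w 0 with rfl | hw
  · simp
  have hw' : 0 < ‖w‖ := norm_pos_iff.2 hw
  calc |2 * ⟪w, v⟫ / ‖w‖ ^ 2| = 2 * |⟪w, v⟫| / ‖w‖ ^ 2 := by
        rw [abs_div, abs_mul, abs_two, abs_of_pos (a := ‖w‖ ^ 2) (by positivity)]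
    _ ≤ 2 * (‖w‖ * ‖v‖) / ‖w‖ ^ 2 := by
        gcongr
        exact abs_real_inner_le_norm w v
    _ = 2 * ‖w‖⁻¹ * ‖v‖ := by field_simp

lemma exists_hasDerivAt_potential_comp {m : ℕ} (hm : Fintype.card ι ≤ m + 1) {α : ι → E}
    {γ : ℝ → E} {v : E} {t : ℝ} (hγ : HasDerivAt γ v t) (ht : γ t ∉ range α) :
    ∃ d, HasDerivAt (fun s => potential α (γ s)) d t ∧
      |d| ≤ (2 * Fintype.card ι + 1) * (2 * ((∏ i, √(1 + ‖α i‖ ^ 2)) *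
        metricDensity m α (γ t)) * ‖v‖) := by
  set B := 2 * ((∏ i, √(1 + ‖α i‖ ^ 2)) * metricDensity m α (γ t)) * ‖v‖ with hB
  have h₀ : HasDerivAt (fun s => log (1 + ‖γ s‖ ^ 2)) (2 * ⟪γ t, v⟫ / (1 + ‖γ t‖ ^ 2)) t :=
    (hγ.norm_sq.const_add 1).log (by positivity)
  have hᵢ (i : ι) : HasDerivAt (fun s => log (‖γ s - α i‖ ^ 2))
      (2 * ⟪γ t - α i, v⟫ / ‖γ t - α i‖ ^ 2) t :=
    (hγ.sub_const (α i)).norm_sq.log (pow_pos (norm_sub_pos_of_notMem_range ht i) 2).ne'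
  have hB₀ : |2 * ⟪γ t, v⟫ / (1 + ‖γ t‖ ^ 2)| ≤ B := by
    refine (abs_two_inner_div_one_add_norm_sq_le _ _).trans ?_
    rw [hB]
    gcongr
    exact inv_sqrt_one_add_norm_sq_le_metricDensity hm ht
  have hBᵢ (i : ι) : |2 * ⟪γ t - α i, v⟫ / ‖γ t - α i‖ ^ 2| ≤ B := by
    refine (abs_two_inner_div_norm_sq_le _ _).trans ?_
    rw [hB]
    gcongr
    exact inv_norm_sub_le_metricDensity hm ht i
  refine ⟨_, h₀.add (HasDerivAt.fun_sum fun i _ => h₀.sub (hᵢ i)), ?_⟩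
  calc _ ≤ |2 * ⟪γ t, v⟫ / (1 + ‖γ t‖ ^ 2)| + ∑ i, (|2 * ⟪γ t, v⟫ / (1 + ‖γ t‖ ^ 2)| +
          |2 * ⟪γ t - α i, v⟫ / ‖γ t - α i‖ ^ 2|) :=
        (abs_add_le _ _).trans (add_le_add le_rfl ((abs_sum_le_sum_abs _ _).trans
          (sum_le_sum fun i _ => abs_sub _ _)))
    _ ≤ B + ∑ _i : ι, (B + B) := by
        gcongr with i
        exact hBᵢ i
    _ = (2 * Fintype.card ι + 1) * B := by rw [sum_const, card_univ, nsmul_eq_mul]; ring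

end Derivative

lemma le_add_setIntegral_of_hasDerivAt_le {u g : ℝ → ℝ} {a b t : ℝ}
    (hu : ∀ s ∈ Ico a b, ∃ d, HasDerivAt u d s ∧ d ≤ g s) (hg : IntegrableOn g (Ico a b))
    (hg₀ : ∀ s ∈ Ico a b, 0 ≤ g s) (ht : t ∈ Ico a b) :
    u t ≤ u a + ∫ s in Ico a b, g s := by
  choose! d hd hdg using hu
  have hsub : Icc a t ⊆ Ico a b := Icc_subset_Ico_right ht.2
  have hFTC : u t - u a ≤ ∫ s in a..t, g s :=
    intervalIntegral.sub_le_integral_of_hasDeriv_right_of_le ht.1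
      (fun s hs => (hd s (hsub hs)).continuousAt.continuousWithinAt)
      (fun s hs => (hd s (hsub (Ioo_subset_Icc_self hs))).hasDerivWithinAt) (hg.mono_set hsub)
      (fun s hs => hdg s (hsub (Ioo_subset_Icc_self hs)))
  have hmono : ∫ s in a..t, g s ≤ ∫ s in Ico a b, g s := by
    rw [intervalIntegral.integral_of_le ht.1]
    exact setIntegral_mono_set hg (ae_restrict_of_forall_mem measurableSet_Ico hg₀)
      (Ioc_subset_Icc_self.trans hsub).eventuallyLE
  linarith

theorem lintegral_metricDensity_mul_norm_deriv_eq_top [InnerProductSpace ℝ E] [ProperSpace E]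
    {m : ℕ} (hm : Fintype.card ι ≤ m + 1) (α : ι → E) (γ : ℝ → E)
    (hγ : ∀ t ∈ Ico (0 : ℝ) 1, DifferentiableAt ℝ γ t)
    (hmaps : ∀ t ∈ Ico (0 : ℝ) 1, γ t ∉ range α)
    (hdiv : ∀ K : Set E, IsCompact K → K ⊆ (range α)ᶜ →
      ∃ t₀ ∈ Ico (0 : ℝ) 1, ∀ t ∈ Ico t₀ 1, γ t ∉ K) :
    ∫⁻ t in Ico (0 : ℝ) 1, ENNReal.ofReal (metricDensity m α (γ t) * ‖deriv γ t‖) = ⊤ := by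
  by_contra hfin
  set g := fun t => metricDensity m α (γ t) * ‖deriv γ t‖
  have hg₀ (t : ℝ) : 0 ≤ g t := mul_nonneg (metricDensity_nonneg m α _) (norm_nonneg _)
  have hγc : ContinuousOn γ (Ico 0 1) := fun t ht => (hγ t ht).continuousAt.continuousWithinAt
  have hg : IntegrableOn g (Ico 0 1) := by
    refine (lintegral_ofReal_ne_top_iff_integrable ?_ (.of_forall hg₀)).1 hfin
    exact (((continuousOn_metricDensity m α).comp hγc hmaps).aestronglyMeasurable
      measurableSet_Ico).mul (aestronglyMeasurable_deriv γ _).norm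
  set C := (2 * Fintype.card ι + 1) * (2 * ∏ i, √(1 + ‖α i‖ ^ 2))
  obtain ⟨K, hK, hKα, hmemK⟩ :=
    exists_isCompact_of_potential_le α (potential α (γ 0) + ∫ t in Ico 0 1, C * g t)
  obtain ⟨t₀, ht₀, hout⟩ := hdiv K hK hKα
  refine hout t₀ ⟨le_rfl, ht₀.2⟩ (hmemK _ (hmaps t₀ ht₀) ?_)
  refine le_add_setIntegral_of_hasDerivAt_le (u := fun t => potential α (γ t))
    (fun t ht => ?_) (hg.const_mul C) (fun t _ => mul_nonneg (by positivity) (hg₀ t)) ht₀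
  obtain ⟨d, hd, hdle⟩ := exists_hasDerivAt_potential_comp hm (hγ t ht).hasDerivAt (hmaps t ht)
  exact ⟨d, hd, (le_abs_self d).trans (hdle.trans_eq (by ring))⟩

theorem complete_model_metric_general
    (m q : ℕ) (hq : q ≤ m + 2)
    (α : Fin (q - 1) → ℂ)
    (γ : ℝ → ℂ)
    (hγ : ∀ t ∈ Set.Ico (0 : ℝ) 1, DifferentiableAt ℝ γ t)
    (hmaps : ∀ t ∈ Set.Ico (0 : ℝ) 1, γ t ∉ Set.range α)
    (hdiv : ∀ K : Set ℂ, IsCompact K → K ⊆ {z : ℂ | z ∉ Set.range α} →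
      ∃ t₀ ∈ Set.Ico (0 : ℝ) 1, ∀ t ∈ Set.Ico t₀ 1, γ t ∉ K) :
    ∫⁻ t in Set.Ico (0 : ℝ) 1,
      ENNReal.ofReal
        ((1 + ‖γ t‖ ^ 2) ^ ((m : ℝ) / 2) / (∏ i, ‖γ t - α i‖) * ‖deriv γ t‖) = ⊤ :=
  lintegral_metricDensity_mul_norm_deriv_eq_top (by rw [Fintype.card_fin]; omega) α γ hγ hmaps hdiv

/-- On `Σ = ℂ \ {α₁,…,α_{q−1}}` with `ds² = (1+|z|²)^m |dz|²/∏|z−αᵢ|²`,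
if `q ≤ m+2` then every divergent curve has infinite length. -/
theorem complete_model_metric
    (m q : ℕ) (hm : 1 ≤ m) (hq : q ≤ m + 2)
    (α : Fin (q - 1) → ℂ) (hα : Function.Injective α)
    (γ : ℝ → ℂ)
    (hγ : ∀ t ∈ Set.Ico (0 : ℝ) 1, DifferentiableAt ℝ γ t)
    (hmaps : ∀ t ∈ Set.Ico (0 : ℝ) 1, γ t ∉ Set.range α)
    (hdiv : ∀ K : Set ℂ, IsCompact K → K ⊆ {z : ℂ | z ∉ Set.range α} →
      ∃ t₀ ∈ Set.Ico (0 : ℝ) 1, ∀ t ∈ Set.Ico t₀ 1, γ t ∉ K) :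
    ∫⁻ t in Set.Ico (0 : ℝ) 1,
      ENNReal.ofReal
        ((1 + ‖γ t‖ ^ 2) ^ ((m : ℝ) / 2) / (∏ i, ‖γ t - α i‖) * ‖deriv γ t‖) = ⊤ :=
  complete_model_metric_general m q hq α γ hγ hmaps hdiv
end

section
/- Let Σ be the complex plane punctured at q−1 distinct points α₁,…,α_{q−1} with g(z) = z and ω = dz/∏_{i=1}^{q−1}(z−α_i). If q ≥ m+3 then there exists a divergent curve in Σ of finite length with respect to ds² = (1+|g|²)^m |ω|²; i.e., the metric is not complete. -/
/-!
Take the ray `t ↦ R / (1 - t)`, `t ∈ [0, 1)`, of the positive real axis, with `R` beyond all the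
punctures; it diverges to `∞`. On it, with `r = |z|`, the density
`(1 + r²)^{m/2} / ∏ |z - αᵢ|` is `O(r^{m - (q - 1)}) = O(r⁻²)` since `q - 1 ≥ m + 2`, while the
speed is `|γ'| = r² / R`. So the integrand of the length is bounded on `[0, 1)` and the length
is finite.
-/

open MeasureTheory Set Filter Topology Bornology

theorem exists_forall_Ico_notMem_of_tendsto_cobounded {E : Type*} [PseudoMetricSpace E]
    {γ : ℝ → E} (hγ : Tendsto γ (𝓝[<] 1) (cobounded E)) {K : Set E} (hK : IsCompact K) :
    ∃ t₀ ∈ Ico (0 : ℝ) 1, ∀ t ∈ Ico t₀ 1, γ t ∉ K := by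
  obtain ⟨l, hl, hlK⟩ := mem_nhdsLT_iff_exists_Ico_subset.1
    (hγ.mono_right Metric.cobounded_le_cocompact hK.compl_mem_cocompact)
  exact ⟨max 0 l, ⟨le_max_left _ _, max_lt one_pos hl⟩,
    fun t ht => hlK ⟨le_of_max_le_right ht.1, ht.2⟩⟩

theorem one_add_sq_rpow_half_le {r : ℝ} (hr : 1 ≤ r) (m : ℕ) :
    (1 + r ^ 2) ^ ((m : ℝ) / 2) ≤ (2 * r) ^ m := by
  calc (1 + r ^ 2) ^ ((m : ℝ) / 2) ≤ ((2 * r) ^ 2) ^ ((m : ℝ) / 2) :=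
        Real.rpow_le_rpow (by positivity) (by nlinarith) (by positivity)
    _ = (2 * r) ^ m := by
        rw [← Real.rpow_natCast (2 * r) 2, ← Real.rpow_mul (by positivity), Nat.cast_ofNat, mul_div_cancel₀ _ two_ne_zero, Real.rpow_natCast]

theorem pow_card_le_prod_norm_sub {ι : Type*} [Fintype ι] {α : ι → ℂ} {z : ℂ}
    (hα : ∀ i, 2 * ‖α i‖ ≤ ‖z‖) : (‖z‖ / 2) ^ Fintype.card ι ≤ ∏ i, ‖z - α i‖ := by
  rw [← Finset.card_univ, ← Finset.prod_const]
  refine Finset.prod_le_prod (fun _ _ => by positivity) fun i _ => ?_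
  linarith [norm_sub_norm_le z (α i), hα i]

theorem one_add_sq_rpow_div_prod_mul_sq_le {ι : Type*} [Fintype ι] {m : ℕ}
    (hm : m + 2 ≤ Fintype.card ι) {α : ι → ℂ} {z : ℂ} (hz : 1 ≤ ‖z‖)
    (hα : ∀ i, 2 * ‖α i‖ ≤ ‖z‖) :
    (1 + ‖z‖ ^ 2) ^ ((m : ℝ) / 2) / (∏ i, ‖z - α i‖) * ‖z‖ ^ 2 ≤ 2 ^ (m + Fintype.card ι) := by
  set r := ‖z‖
  set N := Fintype.card ι
  have hr : 0 < r := by linarith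
  calc (1 + r ^ 2) ^ ((m : ℝ) / 2) / (∏ i, ‖z - α i‖) * r ^ 2
      ≤ (2 * r) ^ m / (r / 2) ^ N * r ^ 2 := by
        gcongr
        exacts [one_add_sq_rpow_half_le hz m, pow_card_le_prod_norm_sub hα]
    _ = 2 ^ (m + N) * (r ^ (m + 2) / r ^ N) := by
        rw [div_pow, mul_pow]
        field_simp
        ring
    _ ≤ 2 ^ (m + N) := by
        rw [mul_le_iff_le_one_right (by positivity)]
        exact div_le_one_of_le₀ (pow_le_pow_right₀ hz hm) (by positivity)

noncomputable def radialCurve (R t : ℝ) : ℂ := ((R / (1 - t) : ℝ) : ℂ)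

namespace radialCurve

variable {R t : ℝ}

theorem norm_eq (hR : 0 ≤ R) (ht : t < 1) : ‖radialCurve R t‖ = R / (1 - t) := by
  rw [radialCurve, Complex.norm_real, Real.norm_of_nonneg (div_nonneg hR (by linarith))]

theorem le_norm (hR : 0 ≤ R) (ht : t ∈ Ico (0 : ℝ) 1) : R ≤ ‖radialCurve R t‖ := by
  rw [norm_eq hR ht.2, le_div_iff₀ (by linarith [ht.2])]
  nlinarith [ht.1]

theorem hasDerivAt (ht : t < 1) :
    HasDerivAt (radialCurve R) ((R / (1 - t) ^ 2 : ℝ) : ℂ) t := by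
  have h := (((hasDerivAt_id t).const_sub 1).inv (by simp; linarith)).const_mul R
  simp only [id, div_eq_mul_inv] at h ⊢
  exact (h.congr_deriv (by ring)).ofReal_comp

theorem norm_deriv (hR : 0 < R) (ht : t < 1) :
    ‖deriv (radialCurve R) t‖ = ‖radialCurve R t‖ ^ 2 / R := by
  rw [(hasDerivAt ht).deriv, norm_eq hR.le ht, Complex.norm_real,
    Real.norm_of_nonneg (div_nonneg hR.le (by positivity))]
  field_simp

theorem tendsto_cobounded (hR : 0 < R) : Tendsto (radialCurve R) (𝓝[<] 1) (cobounded ℂ) := by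
  have hsub : Tendsto (fun t : ℝ => 1 - t) (𝓝[<] 1) (𝓝[>] 0) := by
    refine tendsto_nhdsWithin_iff.2 ⟨?_, eventually_nhdsWithin_of_forall fun t ht => ?_⟩
    · have h : Tendsto (fun t : ℝ => 1 - t) (𝓝 1) (𝓝 (1 - 1)) := tendsto_const_nhds.sub tendsto_id
      simpa using h.mono_left nhdsWithin_le_nhds
    · simpa using ht
  have hnorm : Tendsto (fun t => R / (1 - t)) (𝓝[<] 1) atTop := by
    simpa only [Function.comp_def, div_eq_mul_inv] using (tendsto_inv_nhdsGT_zero.comp hsub).const_mul_atTop hR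
  refine tendsto_norm_atTop_iff_cobounded.1 (hnorm.congr' ?_)
  filter_upwards [self_mem_nhdsWithin] with t ht using (norm_eq hR.le ht).symm

end radialCurve

theorem incomplete_model_metric_general
    (m q : ℕ) (hq : m + 3 ≤ q)
    (α : Fin (q - 1) → ℂ) :
    ∃ γ : ℝ → ℂ,
      (∀ t ∈ Set.Ico (0 : ℝ) 1, DifferentiableAt ℝ γ t) ∧
      (∀ t ∈ Set.Ico (0 : ℝ) 1, γ t ∉ Set.range α) ∧
      (∀ K : Set ℂ, IsCompact K → K ⊆ {z : ℂ | z ∉ Set.range α} →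
        ∃ t₀ ∈ Set.Ico (0 : ℝ) 1, ∀ t ∈ Set.Ico t₀ 1, γ t ∉ K) ∧
      (∫⁻ t in Set.Ico (0 : ℝ) 1,
        ENNReal.ofReal
          ((1 + ‖γ t‖ ^ 2) ^ ((m : ℝ) / 2) / (∏ i, ‖γ t - α i‖) * ‖deriv γ t‖)) < ⊤ := by
  set R := 2 * ‖α‖ + 1
  have hR : 0 < R := by positivity
  have hfar : ∀ t ∈ Ico (0 : ℝ) 1, 1 ≤ ‖radialCurve R t‖ ∧ ∀ i, 2 * ‖α i‖ ≤ ‖radialCurve R t‖ :=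
    fun t ht => have := radialCurve.le_norm hR.le ht
      ⟨by linarith [norm_nonneg α], fun i => by linarith [norm_le_pi_norm α i]⟩
  refine ⟨radialCurve R, fun t ht => (radialCurve.hasDerivAt ht.2).differentiableAt,
    ?_, fun K hK _ => exists_forall_Ico_notMem_of_tendsto_cobounded
      (radialCurve.tendsto_cobounded hR) hK, ?_⟩
  · rintro t ht ⟨i, hi⟩
    have := radialCurve.le_norm hR.le ht
    linarith [norm_le_pi_norm α i, norm_nonneg α, congrArg norm hi]
  · refine setLIntegral_lt_top_of_le_nnreal (by simp)
      ⟨(2 ^ (m + (q - 1)) / R).toNNReal, fun t ht => ENNReal.ofReal_le_ofReal ?_⟩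
    rw [radialCurve.norm_deriv hR ht.2, mul_div_assoc', div_le_div_iff_of_pos_right hR]
    simpa using one_add_sq_rpow_div_prod_mul_sq_le (by rw [Fintype.card_fin]; omega) (hfar t ht).1 (hfar t ht).2

/-- On `Σ = ℂ \ {α₁,…,α_{q−1}}` with `ds² = (1+|z|²)^m |dz|²/∏|z−αᵢ|²`,
if `q ≥ m+3` then there is a divergent curve of finite length, i.e. the metric is
not complete. -/
theorem incomplete_model_metric
    (m q : ℕ) (hm : 1 ≤ m) (hq : m + 3 ≤ q)
    (α : Fin (q - 1) → ℂ) (hα : Function.Injective α) :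
    ∃ γ : ℝ → ℂ,
      (∀ t ∈ Set.Ico (0 : ℝ) 1, DifferentiableAt ℝ γ t) ∧
      (∀ t ∈ Set.Ico (0 : ℝ) 1, γ t ∉ Set.range α) ∧
      (∀ K : Set ℂ, IsCompact K → K ⊆ {z : ℂ | z ∉ Set.range α} →
        ∃ t₀ ∈ Set.Ico (0 : ℝ) 1, ∀ t ∈ Set.Ico t₀ 1, γ t ∉ K) ∧
      (∫⁻ t in Set.Ico (0 : ℝ) 1,
        ENNReal.ofReal
          ((1 + ‖γ t‖ ^ 2) ^ ((m : ℝ) / 2) / (∏ i, ‖γ t - α i‖) * ‖deriv γ t‖)) < ⊤ :=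
  incomplete_model_metric_general m q hq α
end

section
/- On the punctured plane Σ = ℂ \ {0, α₁,…,α_{m/2}, 1/α₁,…,1/α_{m/2}} (m ≥ 2 even, α_i ∈ ℂ \ {0, ±1} distinct with all listed points distinct), the functions g(z) = z and ĝ(z) = 1/z share the m+4 distinct values 0, ∞, 1, −1, α₁,…,α_{m/2}, 1/α₁,…,1/α_{m/2}: for each such value α, the preimage g^{-1}(α) equals ĝ^{-1}(α) as subsets of Σ, yet g ≢ ĝ. -/
open OnePoint

/-- on `Σ = ℂ \ {0, αᵢ, 1/αᵢ}` (with `m = 2n`, `n ≥ 1`, all listed points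
distinct), the maps `g(z) = z` and `gh(z) = 1/z` (valued in the Riemann sphere
`OnePoint ℂ`) share the `m + 4` distinct values `0, ∞, 1, −1, αᵢ, 1/αᵢ`, yet `g ≢ gh`. -/
theorem sharing_example
    (n : ℕ) (hn : 1 ≤ n) (m : ℕ) (hm : m = 2 * n)
    (α : Fin n → ℂ) (hinj : Function.Injective α)
    (h0 : ∀ i, α i ≠ 0) (h1 : ∀ i, α i ≠ 1) (hneg1 : ∀ i, α i ≠ -1)
    (hinv : ∀ i j, α i ≠ (α j)⁻¹)
    (S : Set ℂ)
    (hS : S = {z : ℂ | z ≠ 0 ∧ (∀ i, z ≠ α i) ∧ (∀ i, z ≠ (α i)⁻¹)})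
    (g gh : ℂ → OnePoint ℂ)
    (hg : ∀ z : ℂ, g z = (z : OnePoint ℂ))
    (hgh : ∀ z : ℂ, gh z = if z = 0 then ∞ else ((z⁻¹ : ℂ) : OnePoint ℂ))
    (V : Set (OnePoint ℂ))
    (hV : V = {((0 : ℂ) : OnePoint ℂ), ∞, ((1 : ℂ) : OnePoint ℂ), ((-1 : ℂ) : OnePoint ℂ)}
        ∪ (Set.range fun i => ((α i : ℂ) : OnePoint ℂ))
        ∪ (Set.range fun i => (((α i)⁻¹ : ℂ) : OnePoint ℂ))) :
    V.ncard = m + 4 ∧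
    (∀ a ∈ V, {z : ℂ | z ∈ S ∧ g z = a} = {z : ℂ | z ∈ S ∧ gh z = a}) ∧
    ¬ (∀ z ∈ S, g z = gh z) := by
  subst hm hS hV
  set f : Fin n → OnePoint ℂ := fun i => ((α i : ℂ) : OnePoint ℂ) with hf
  set f' : Fin n → OnePoint ℂ := fun i => (((α i)⁻¹ : ℂ) : OnePoint ℂ) with hf'
  have hfinj : Function.Injective f := fun i j h => hinj (OnePoint.coe_eq_coe.mp h)
  have hf'inj : Function.Injective f' := by
    intro i j h
    have : (α i)⁻¹ = (α j)⁻¹ := OnePoint.coe_eq_coe.mp h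
    exact hinj (by rw [← inv_inv (α i), this, inv_inv])
  refine ⟨?_, ?_, ?_⟩
  · -- cardinality
    have hB : ({((0 : ℂ) : OnePoint ℂ), ∞, ((1 : ℂ) : OnePoint ℂ),
        ((-1 : ℂ) : OnePoint ℂ)} : Set (OnePoint ℂ)).ncard = 4 := by
      rw [Set.ncard_insert_of_notMem (by
            simp [OnePoint.coe_eq_coe, OnePoint.coe_ne_infty]) (Set.toFinite _),
          Set.ncard_insert_of_notMem (by
            simp [OnePoint.infty_ne_coe]) (Set.toFinite _),
          Set.ncard_pair (by simp only [ne_eq, OnePoint.coe_eq_coe]; norm_num)]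
    have hR1 : (Set.range f).ncard = n := by
      rw [← Nat.card_coe_set_eq, Nat.card_range_of_injective hfinj, Nat.card_eq_fintype_card,
        Fintype.card_fin]
    have hR2 : (Set.range f').ncard = n := by
      rw [← Nat.card_coe_set_eq, Nat.card_range_of_injective hf'inj, Nat.card_eq_fintype_card,
        Fintype.card_fin]
    have hd1 : Disjoint ({((0 : ℂ) : OnePoint ℂ), ∞, ((1 : ℂ) : OnePoint ℂ),
        ((-1 : ℂ) : OnePoint ℂ)} : Set (OnePoint ℂ)) (Set.range f) := by
      rw [Set.disjoint_right]
      rintro _ ⟨i, rfl⟩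
      simp only [hf, Set.mem_insert_iff, Set.mem_singleton_iff, OnePoint.coe_eq_coe,
        OnePoint.coe_ne_infty, or_false, false_or]
      push_neg
      exact ⟨h0 i, h1 i, hneg1 i⟩
    have hd2 : Disjoint (({((0 : ℂ) : OnePoint ℂ), ∞, ((1 : ℂ) : OnePoint ℂ),
        ((-1 : ℂ) : OnePoint ℂ)} : Set (OnePoint ℂ)) ∪ Set.range f) (Set.range f') := by
      rw [Set.disjoint_right]
      rintro _ ⟨i, rfl⟩
      simp only [hf, hf', Set.mem_union, Set.mem_insert_iff, Set.mem_singleton_iff,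
        Set.mem_range, OnePoint.coe_eq_coe, OnePoint.coe_ne_infty, or_false, false_or]
      push_neg
      refine ⟨⟨?_, ?_, ?_⟩, fun j => ?_⟩
      · simp [h0 i]
      · intro h
        exact h1 i (by rw [← inv_inv (α i), h, inv_one])
      · intro h
        exact hneg1 i (by rw [← inv_inv (α i), h]; norm_num)
      · intro h
        exact hinv j i h
    rw [Set.ncard_union_eq hd2 (Set.Finite.union (Set.toFinite _) (Set.finite_range f))
        (Set.finite_range f'),
      Set.ncard_union_eq hd1 (Set.toFinite _) (Set.finite_range f), hB, hR1, hR2]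
    ring
  · -- shared values
    intro a ha
    ext z
    simp only [Set.mem_setOf_eq, and_congr_right_iff]
    intro hz
    obtain ⟨hz0, hzα, hzαi⟩ := hz
    rw [hg, hgh, if_neg hz0]
    simp only [Set.mem_union, Set.mem_insert_iff, Set.mem_singleton_iff, Set.mem_range] at ha
    rcases ha with ((rfl | rfl | rfl | rfl) | ⟨i, rfl⟩) | ⟨i, rfl⟩
    · simp only [OnePoint.coe_eq_coe, inv_eq_zero]
    · simp [OnePoint.coe_ne_infty]
    · simp only [OnePoint.coe_eq_coe, inv_eq_one]
    · simp only [OnePoint.coe_eq_coe]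
      rw [inv_eq_iff_eq_inv]
      norm_num
    · show (↑z : OnePoint ℂ) = ↑(α i) ↔ (↑z⁻¹ : OnePoint ℂ) = ↑(α i)
      simp only [OnePoint.coe_eq_coe]
      constructor
      · intro h; exact absurd h (hzα i)
      · intro h
        rw [inv_eq_iff_eq_inv] at h
        exact absurd h (hzαi i)
    · show (↑z : OnePoint ℂ) = ↑(α i)⁻¹ ↔ (↑z⁻¹ : OnePoint ℂ) = ↑(α i)⁻¹
      simp only [OnePoint.coe_eq_coe]
      constructor
      · intro h; exact absurd h (hzαi i)
      · intro h
        rw [inv_eq_iff_eq_inv, inv_inv] at h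
        exact absurd h (hzα i)
  · -- g ≢ gh
    intro hcontra
    have hfin : ({0, 1, -1} ∪ Set.range α ∪ Set.range (fun i => (α i)⁻¹) : Set ℂ).Finite :=
      (((Set.toFinite _).union (Set.finite_range α)).union (Set.finite_range _))
    obtain ⟨z, hz⟩ := (Set.infinite_univ.diff hfin).nonempty
    simp only [Set.mem_diff, Set.mem_union, Set.mem_insert_iff, Set.mem_singleton_iff,
      Set.mem_range, not_or, not_exists] at hz
    obtain ⟨-, ⟨⟨hz0, hz1, hzn1⟩, hzα⟩, hzαi⟩ := hz
    have hzS : z ∈ {z : ℂ | z ≠ 0 ∧ (∀ i, z ≠ α i) ∧ (∀ i, z ≠ (α i)⁻¹)} :=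
      ⟨hz0, fun i h => hzα i h.symm, fun i h => hzαi i h.symm⟩
    have := hcontra z hzS
    rw [hg, hgh, if_neg hz0, OnePoint.coe_eq_coe] at this
    have h2 : z * z = 1 := by field_simp [hz0] at this; linear_combination this
    have : (z - 1) * (z + 1) = 0 := by ring_nf; linear_combination h2
    rcases mul_eq_zero.mp this with h | h
    · exact hz1 (sub_eq_zero.mp h)
    · exact hzn1 (eq_neg_of_add_eq_zero_left h)
end
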